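/- arXiv:1703.09411 — 3 statements merged into one kernel-verified Lean document; each statement's English description precedes it below -/
import Mathlib

section
/- For all vectors a, b ∈ ℝⁿ and all real p with 1 < p < ∞, the inequality (|a|^{p-2} a − |b|^{p-2} b) · (a − b) ≥ 0 holds, where · denotes the Euclidean inner product and |·| the Euclidean norm (with the convention |0|^{p-2}·0 = 0). -/
/-!
Write `x = ‖a‖`, `y = ‖b‖` and `φ t = t ^ (p - 2)`. Expanding the inner product and bounding
`⟪a, b⟫ ≤ x y` by Cauchy–Schwarz (its coefficient `-(φ x + φ y)` is nonpositive) reduces the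
claim to the scalar inequality `0 ≤ (φ x * x - φ y * y) * (x - y)`, i.e. to the monotonicity of
`t ↦ t ^ (p - 1)` on `[0, ∞)`.
-/

lemma MonotoneOn.sub_mul_sub_nonneg {f : ℝ → ℝ} {s : Set ℝ} (hf : MonotoneOn f s) {x y : ℝ}
    (hx : x ∈ s) (hy : y ∈ s) : 0 ≤ (f x - f y) * (x - y) := by
  rcases le_total x y with h | h
  · exact mul_nonneg_of_nonpos_of_nonpos (sub_nonpos.2 (hf hx hy h)) (sub_nonpos.2 h)
  · exact mul_nonneg (sub_nonneg.2 (hf hy hx h)) (sub_nonneg.2 h)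

theorem inner_smul_norm_sub_smul_norm_nonneg {E : Type*} [NormedAddCommGroup E]
    [InnerProductSpace ℝ E] {φ : ℝ → ℝ} (hφ : ∀ t, 0 ≤ t → 0 ≤ φ t)
    (hmono : MonotoneOn (fun t => φ t * t) (Set.Ici 0)) (a b : E) :
    0 ≤ inner ℝ (φ ‖a‖ • a - φ ‖b‖ • b) (a - b) := by
  set x := ‖a‖
  set y := ‖b‖
  have hφxy : 0 ≤ φ x + φ y := add_nonneg (hφ x (norm_nonneg a)) (hφ y (norm_nonneg b))
  have expand : inner ℝ (φ x • a - φ y • b) (a - b)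
      = φ x * x * x + φ y * y * y - (φ x + φ y) * inner ℝ a b := by
    simp only [inner_sub_left, inner_sub_right, real_inner_smul_left,
      real_inner_self_eq_norm_mul_norm, real_inner_comm a b]
    ring
  calc 0 ≤ (φ x * x - φ y * y) * (x - y) :=
        hmono.sub_mul_sub_nonneg (norm_nonneg a) (norm_nonneg b)
    _ = φ x * x * x + φ y * y * y - (φ x + φ y) * (x * y) := by ring
    _ ≤ φ x * x * x + φ y * y * y - (φ x + φ y) * inner ℝ a b :=
        sub_le_sub_left (mul_le_mul_of_nonneg_left (real_inner_le_norm a b) hφxy) _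
    _ = inner ℝ (φ x • a - φ y • b) (a - b) := expand.symm

theorem Real.monotoneOn_rpow_sub_two_mul_self {p : ℝ} (hp : 1 < p) :
    MonotoneOn (fun t : ℝ => t ^ (p - 2) * t) (Set.Ici 0) := by
  refine (Real.monotoneOn_rpow_Ici_of_exponent_nonneg (r := p - 1) (by linarith)).congr ?_
  intro t ht
  dsimp only
  rw [← Real.rpow_add_one' ht (by linarith)]
  ring_nf

/-- monotonicity of the p-Laplacian vector field:
`(|a|^{p-2} a − |b|^{p-2} b) · (a − b) ≥ 0` for `1 < p < ∞`. -/
theorem stmt3 {n : ℕ} (p : ℝ) (hp : 1 < p) (a b : EuclideanSpace ℝ (Fin n)) :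
    0 ≤ (inner ℝ ((‖a‖ ^ (p - 2)) • a - (‖b‖ ^ (p - 2)) • b) (a - b) : ℝ) :=
  inner_smul_norm_sub_smul_norm_nonneg (fun _ ht => Real.rpow_nonneg ht _)
    (Real.monotoneOn_rpow_sub_two_mul_self hp) a b
end

section
/- Let γ, β, θ ∈ M₀(Ω) with θ(x) ≥ γ(x) + β(x) + ε₀ a.e. for some ε₀ > 0. For u in the nonlinear class S_{1,γ(x),β(x),θ(x)}(Ω), set λ_u = [u]_{S_{γ,β,θ}} (the pseudo-norm) and ℜ(u) = ∫_Ω |u|^{θ(x)} dx + Σᵢ ∫_Ω |u|^{γ(x)} |D_i u|^{β(x)} dx (the modular). Then min{λ_u^{γ⁻+β⁻}, λ_u^{θ⁺}} ≤ ℜ(u) ≤ max{λ_u^{γ⁻+β⁻}, λ_u^{θ⁺}}. -/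
/-!
Let `R(l)` be the modular of `u / l` (the sum in the pseudo-norm), so that
`λ_u = inf {l > 0 : R(l) ≤ 1}`. Since `|u / l|^θ = |u|^θ / l^θ` and
`(|u|^{γ/β} |D_i u| / l^{γ/β + 1})^β = |u|^γ |D_i u|^β / l^{γ+β}`, every integrand of `ℜ(u)` is the
corresponding integrand of `R(l)` times `l^s` with `γ⁻ + β⁻ ≤ s ≤ θ⁺`, hence
`min(l^{γ⁻+β⁻}, l^{θ⁺}) R(l) ≤ ℜ(u) ≤ max(l^{γ⁻+β⁻}, l^{θ⁺}) R(l)`.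
Below `λ_u` we have `R(l) > 1`, just above it some `m` has `R(m) ≤ 1`, and letting `l → λ_u`
gives the two bounds.
-/

open MeasureTheory ENNReal

/-- The modular `ℜ^{γ,β,θ}(u) = ∫_Ω |u|^{θ(x)} dx + Σᵢ ∫_Ω |u|^{γ(x)} |D_i u|^{β(x)} dx`
of the nonlinear class `S_{1,γ(x),β(x),θ(x)}(Ω)`, with `Du` the (weak) partial derivatives. -/
noncomputable def modularS {n : ℕ} (Ω : Set (Fin n → ℝ)) (γ β θ : (Fin n → ℝ) → ℝ)
    (u : (Fin n → ℝ) → ℝ) (Du : Fin n → (Fin n → ℝ) → ℝ) : ℝ≥0∞ :=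
  (∫⁻ x in Ω, ENNReal.ofReal (|u x| ^ θ x))
    + ∑ i : Fin n, ∫⁻ x in Ω, ENNReal.ofReal (|u x| ^ γ x * |Du i x| ^ β x)

/-- The pseudo-norm `[u]_{S_{γ,β,θ}}`. -/
noncomputable def pseudoNormS {n : ℕ} (Ω : Set (Fin n → ℝ)) (γ β θ : (Fin n → ℝ) → ℝ)
    (u : (Fin n → ℝ) → ℝ) (Du : Fin n → (Fin n → ℝ) → ℝ) : ℝ :=
  sInf {l : ℝ | 0 < l ∧
    (∫⁻ x in Ω, ENNReal.ofReal (|u x / l| ^ θ x))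
      + ∑ i : Fin n, ∫⁻ x in Ω,
          ENNReal.ofReal ((|u x| ^ (γ x / β x) * |Du i x| / l ^ (γ x / β x + 1)) ^ β x) ≤ 1}

open Filter

lemma min_rpow_le_rpow {l p q s : ℝ} (hl : 0 < l) (hps : p ≤ s) (hsq : s ≤ q) :
    min (l ^ p) (l ^ q) ≤ l ^ s := by
  rcases le_total 1 l with h | h
  · exact (min_le_left _ _).trans (Real.rpow_le_rpow_of_exponent_le h hps)
  · exact (min_le_right _ _).trans (Real.rpow_le_rpow_of_exponent_ge hl h hsq)

lemma rpow_le_max_rpow {l p q s : ℝ} (hl : 0 < l) (hps : p ≤ s) (hsq : s ≤ q) :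
    l ^ s ≤ max (l ^ p) (l ^ q) := by
  rcases le_total 1 l with h | h
  · exact (Real.rpow_le_rpow_of_exponent_le h hsq).trans (le_max_right _ _)
  · exact (Real.rpow_le_rpow_of_exponent_ge hl h hps).trans (le_max_left _ _)

noncomputable def luxemburgGauge (R : ℝ → ℝ≥0∞) : ℝ :=
  sInf {l : ℝ | 0 < l ∧ R l ≤ 1}

section LuxemburgGauge

variable {R : ℝ → ℝ≥0∞} {M : ℝ≥0∞} {p q : ℝ}

lemma luxemburgGauge_nonneg : 0 ≤ luxemburgGauge R :=
  Real.sInf_nonneg fun _ hl => hl.1.le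

lemma one_lt_of_lt_luxemburgGauge {l : ℝ} (hl : 0 < l) (hlt : l < luxemburgGauge R) :
    1 < R l := by
  by_contra! h
  exact hlt.not_ge (csInf_le ⟨0, fun _ hm => hm.1.le⟩ ⟨hl, h⟩)

theorem ofReal_min_rpow_luxemburgGauge_le (hp : 0 < p)
    (hlow : ∀ l, 0 < l → ENNReal.ofReal (min (l ^ p) (l ^ q)) * R l ≤ M) :
    ENNReal.ofReal (min (luxemburgGauge R ^ p) (luxemburgGauge R ^ q)) ≤ M := by
  rcases luxemburgGauge_nonneg.eq_or_lt with hzero | hpos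
  · rw [← hzero, Real.zero_rpow hp.ne', ENNReal.ofReal_eq_zero.2 (min_le_left _ _)]
    exact zero_le
  have hcont : ContinuousAt (fun l : ℝ => ENNReal.ofReal (min (l ^ p) (l ^ q)))
      (luxemburgGauge R) :=
    ENNReal.continuous_ofReal.continuousAt.comp
      ((Real.continuousAt_rpow_const _ p (Or.inl hpos.ne')).min
        (Real.continuousAt_rpow_const _ q (Or.inl hpos.ne')))
  refine le_of_tendsto
    (hcont.tendsto.mono_left (nhdsWithin_le_nhds (s := Set.Iio (luxemburgGauge R)))) ?_
  filter_upwards [Ioo_mem_nhdsLT hpos] with l ⟨hl, hlt⟩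
  calc ENNReal.ofReal (min (l ^ p) (l ^ q))
      = ENNReal.ofReal (min (l ^ p) (l ^ q)) * 1 := (mul_one _).symm
    _ ≤ ENNReal.ofReal (min (l ^ p) (l ^ q)) * R l := by
        gcongr; exact (one_lt_of_lt_luxemburgGauge hl hlt).le
    _ ≤ M := hlow l hl

lemma exists_le_one_of_ofReal_min_rpow_mul_le (hp : 0 < p) (hq : 0 < q) (hM : M ≠ ⊤)
    (hlow : ∀ l, 0 < l → ENNReal.ofReal (min (l ^ p) (l ^ q)) * R l ≤ M) :
    ∃ l, 0 < l ∧ R l ≤ 1 := by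
  obtain ⟨L, ⟨hLp, hLq⟩, hL⟩ := (((tendsto_rpow_atTop hp).eventually_ge_atTop M.toReal).and
    ((tendsto_rpow_atTop hq).eventually_ge_atTop M.toReal)).and (eventually_gt_atTop 0)
    |>.exists
  set c := ENNReal.ofReal (min (L ^ p) (L ^ q))
  have hc : c ≠ 0 := (ENNReal.ofReal_pos.2 (by positivity)).ne'
  have hMc : M ≤ c := by
    rw [← ENNReal.ofReal_toReal hM]
    exact ENNReal.ofReal_le_ofReal (le_min hLp hLq)
  refine ⟨L, hL, (ENNReal.mul_le_mul_iff_right hc ofReal_ne_top).1 ?_⟩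
  rw [mul_one]
  exact (hlow L hL).trans hMc

theorem le_ofReal_max_rpow_luxemburgGauge (hp : 0 ≤ p) (hq : 0 ≤ q)
    (hne : ∃ l, 0 < l ∧ R l ≤ 1)
    (hup : ∀ l, 0 < l → M ≤ ENNReal.ofReal (max (l ^ p) (l ^ q)) * R l) :
    M ≤ ENNReal.ofReal (max (luxemburgGauge R ^ p) (luxemburgGauge R ^ q)) := by
  have hcont : ContinuousAt (fun l : ℝ => ENNReal.ofReal (max (l ^ p) (l ^ q)))
      (luxemburgGauge R) :=
    ENNReal.continuous_ofReal.continuousAt.comp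
      ((Real.continuousAt_rpow_const _ p (Or.inr hp)).max
        (Real.continuousAt_rpow_const _ q (Or.inr hq)))
  refine ge_of_tendsto
    (hcont.tendsto.mono_left (nhdsWithin_le_nhds (s := Set.Ioi (luxemburgGauge R)))) ?_
  filter_upwards [self_mem_nhdsWithin] with l hl
  obtain ⟨m, ⟨hm, hRm⟩, hml⟩ := (csInf_lt_iff ⟨0, fun _ hm => hm.1.le⟩ hne).1 hl
  calc M ≤ ENNReal.ofReal (max (m ^ p) (m ^ q)) * R m := hup m hm
    _ ≤ ENNReal.ofReal (max (m ^ p) (m ^ q)) := by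
        simpa using mul_le_mul_right hRm (ENNReal.ofReal (max (m ^ p) (m ^ q)))
    _ ≤ ENNReal.ofReal (max (l ^ p) (l ^ q)) := by gcongr

end LuxemburgGauge

section Lintegral

variable {X : Type*} [MeasurableSpace X] {μ : Measure X} {c : ℝ} {A B : X → ℝ}

lemma ofReal_mul_lintegral_div_le (hc : 0 ≤ c) (h : ∀ᵐ x ∂μ, 0 ≤ A x ∧ 0 < B x ∧ c ≤ B x) :
    ENNReal.ofReal c * ∫⁻ x, ENNReal.ofReal (A x / B x) ∂μ ≤ ∫⁻ x, ENNReal.ofReal (A x) ∂μ := by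
  rw [← lintegral_const_mul' _ _ ofReal_ne_top]
  refine lintegral_mono_ae ?_
  filter_upwards [h] with x ⟨hA, hB, hcB⟩
  rw [← ENNReal.ofReal_mul hc]
  refine ENNReal.ofReal_le_ofReal ?_
  calc c * (A x / B x) ≤ B x * (A x / B x) := mul_le_mul_of_nonneg_right hcB (by positivity)
    _ = A x := mul_div_cancel₀ _ hB.ne'

lemma lintegral_le_ofReal_mul_lintegral_div (hc : 0 ≤ c)
    (h : ∀ᵐ x ∂μ, 0 ≤ A x ∧ 0 < B x ∧ B x ≤ c) :
    ∫⁻ x, ENNReal.ofReal (A x) ∂μ ≤ ENNReal.ofReal c * ∫⁻ x, ENNReal.ofReal (A x / B x) ∂μ := by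
  rw [← lintegral_const_mul' _ _ ofReal_ne_top]
  refine lintegral_mono_ae ?_
  filter_upwards [h] with x ⟨hA, hB, hBc⟩
  rw [← ENNReal.ofReal_mul hc]
  refine ENNReal.ofReal_le_ofReal ?_
  calc A x = B x * (A x / B x) := (mul_div_cancel₀ _ hB.ne').symm
    _ ≤ c * (A x / B x) := mul_le_mul_of_nonneg_right hBc (by positivity)

end Lintegral

section Modular

variable {n : ℕ} (Ω : Set (Fin n → ℝ)) (γ β θ : (Fin n → ℝ) → ℝ)
  (u : (Fin n → ℝ) → ℝ) (Du : Fin n → (Fin n → ℝ) → ℝ)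

noncomputable def scaledModularS (l : ℝ) : ℝ≥0∞ :=
  (∫⁻ x in Ω, ENNReal.ofReal (|u x / l| ^ θ x))
    + ∑ i : Fin n, ∫⁻ x in Ω,
        ENNReal.ofReal ((|u x| ^ (γ x / β x) * |Du i x| / l ^ (γ x / β x + 1)) ^ β x)

lemma pseudoNormS_eq_luxemburgGauge :
    pseudoNormS Ω γ β θ u Du = luxemburgGauge (scaledModularS Ω γ β θ u Du) := rfl

variable {Ω γ β θ}

lemma scaledModularS_eq {l : ℝ} (hl : 0 < l) (hβ : ∀ᵐ x ∂(volume.restrict Ω), 0 < β x) :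
    scaledModularS Ω γ β θ u Du l =
      (∫⁻ x in Ω, ENNReal.ofReal (|u x| ^ θ x / l ^ θ x))
        + ∑ i : Fin n, ∫⁻ x in Ω,
            ENNReal.ofReal (|u x| ^ γ x * |Du i x| ^ β x / l ^ (γ x + β x)) := by
  unfold scaledModularS
  congr 1
  · simp_rw [abs_div, abs_of_pos hl, Real.div_rpow (abs_nonneg _) hl.le]
  · refine Finset.sum_congr rfl fun i _ => lintegral_congr_ae ?_
    filter_upwards [hβ] with x hx
    rw [Real.div_rpow (by positivity) (by positivity), Real.mul_rpow (by positivity) (abs_nonneg _),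
      ← Real.rpow_mul (abs_nonneg _), ← Real.rpow_mul hl.le, div_mul_cancel₀ _ hx.ne',
      add_mul, div_mul_cancel₀ _ hx.ne', one_mul]

variable {p q l : ℝ}

lemma ofReal_min_rpow_mul_scaledModularS_le (hl : 0 < l)
    (hexp : ∀ᵐ x ∂(volume.restrict Ω), 0 < β x ∧ p ≤ γ x + β x ∧ γ x + β x ≤ θ x ∧ θ x ≤ q) :
    ENNReal.ofReal (min (l ^ p) (l ^ q)) * scaledModularS Ω γ β θ u Du l ≤
      modularS Ω γ β θ u Du := by
  rw [scaledModularS_eq u Du hl (hexp.mono fun _ hx => hx.1), modularS, mul_add, Finset.mul_sum]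
  have hc : 0 ≤ min (l ^ p) (l ^ q) := by positivity
  refine add_le_add (ofReal_mul_lintegral_div_le hc ?_)
    (Finset.sum_le_sum fun i _ => ofReal_mul_lintegral_div_le hc ?_)
  · filter_upwards [hexp] with x ⟨_, hp, hθ, hq⟩
    exact ⟨by positivity, by positivity, min_rpow_le_rpow hl (hp.trans hθ) hq⟩
  · filter_upwards [hexp] with x ⟨_, hp, hθ, hq⟩
    exact ⟨by positivity, by positivity, min_rpow_le_rpow hl hp (hθ.trans hq)⟩

lemma modularS_le_ofReal_max_rpow_mul_scaledModularS (hl : 0 < l)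
    (hexp : ∀ᵐ x ∂(volume.restrict Ω), 0 < β x ∧ p ≤ γ x + β x ∧ γ x + β x ≤ θ x ∧ θ x ≤ q) :
    modularS Ω γ β θ u Du ≤
      ENNReal.ofReal (max (l ^ p) (l ^ q)) * scaledModularS Ω γ β θ u Du l := by
  rw [scaledModularS_eq u Du hl (hexp.mono fun _ hx => hx.1), modularS, mul_add, Finset.mul_sum]
  have hc : 0 ≤ max (l ^ p) (l ^ q) := by positivity
  refine add_le_add (lintegral_le_ofReal_mul_lintegral_div hc ?_)
    (Finset.sum_le_sum fun i _ => lintegral_le_ofReal_mul_lintegral_div hc ?_)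
  · filter_upwards [hexp] with x ⟨_, hp, hθ, hq⟩
    exact ⟨by positivity, by positivity, rpow_le_max_rpow hl (hp.trans hθ) hq⟩
  · filter_upwards [hexp] with x ⟨_, hp, hθ, hq⟩
    exact ⟨by positivity, by positivity, rpow_le_max_rpow hl hp (hθ.trans hq)⟩

end Modular

theorem stmt8_general {n : ℕ} (Ω : Set (Fin n → ℝ))
    (γ β θ : (Fin n → ℝ) → ℝ)
    (gm bm tp : ℝ) (hgm1 : 1 ≤ gm) (hbm1 : 1 ≤ bm)
    (hbd : ∀ᵐ x ∂(volume.restrict Ω), gm ≤ γ x ∧ bm ≤ β x ∧ θ x ≤ tp)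
    (ε₀ : ℝ) (hε₀ : 0 < ε₀)
    (hθge : ∀ᵐ x ∂(volume.restrict Ω), γ x + β x + ε₀ ≤ θ x)
    (u : (Fin n → ℝ) → ℝ)
    (Du : Fin n → (Fin n → ℝ) → ℝ)
    (hmem : modularS Ω γ β θ u Du < ⊤) :
    ENNReal.ofReal (min (pseudoNormS Ω γ β θ u Du ^ (gm + bm))
        (pseudoNormS Ω γ β θ u Du ^ tp))
      ≤ modularS Ω γ β θ u Du ∧
    modularS Ω γ β θ u Du
      ≤ ENNReal.ofReal (max (pseudoNormS Ω γ β θ u Du ^ (gm + bm))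
          (pseudoNormS Ω γ β θ u Du ^ tp)) := by
  have hp : 0 < gm + bm := by linarith
  have hexp : ∀ᵐ x ∂(volume.restrict Ω),
      0 < β x ∧ gm + bm ≤ γ x + β x ∧ γ x + β x ≤ θ x ∧ θ x ≤ tp := by
    filter_upwards [hbd, hθge] with x ⟨hγ, hβ, hθ⟩ hγβθ
    exact ⟨by linarith, by linarith, by linarith, hθ⟩
  have hlow := fun l (hl : 0 < l) => ofReal_min_rpow_mul_scaledModularS_le u Du hl hexp
  rw [pseudoNormS_eq_luxemburgGauge]
  refine ⟨ofReal_min_rpow_luxemburgGauge_le hp hlow, ?_⟩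
  rcases eq_or_ne (volume.restrict Ω) 0 with hΩ | hΩ
  · simp [modularS, hΩ]
  have : (ae (volume.restrict Ω)).NeBot := ae_neBot.2 hΩ
  obtain ⟨x, -, hpγβ, hγβθ, hθtp⟩ := hexp.exists
  have hq : 0 < tp := by linarith
  exact le_ofReal_max_rpow_luxemburgGauge hp.le hq.le
    (exists_le_one_of_ofReal_min_rpow_mul_le hp hq hmem.ne hlow)
    fun l hl => modularS_le_ofReal_max_rpow_mul_scaledModularS u Du hl hexp

/-- pseudo-norm–modular comparison in `S_{1,γ(x),β(x),θ(x)}(Ω)`: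
`min{λ_u^{γ⁻+β⁻}, λ_u^{θ⁺}} ≤ ℜ(u) ≤ max{λ_u^{γ⁻+β⁻}, λ_u^{θ⁺}}`. -/
theorem stmt8 {n : ℕ} (Ω : Set (Fin n → ℝ)) (hΩm : MeasurableSet Ω)
    (hΩb : Bornology.IsBounded Ω)
    (γ β θ : (Fin n → ℝ) → ℝ) (hγ : Measurable γ) (hβ : Measurable β) (hθ : Measurable θ)
    (gm bm tp : ℝ) (hgm1 : 1 ≤ gm) (hbm1 : 1 ≤ bm)
    (hbd : ∀ᵐ x ∂(volume.restrict Ω), gm ≤ γ x ∧ bm ≤ β x ∧ θ x ≤ tp)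
    (ε₀ : ℝ) (hε₀ : 0 < ε₀)
    (hθge : ∀ᵐ x ∂(volume.restrict Ω), γ x + β x + ε₀ ≤ θ x)
    (u : (Fin n → ℝ) → ℝ) (hu : Measurable u)
    (Du : Fin n → (Fin n → ℝ) → ℝ) (hDu : ∀ i, Measurable (Du i))
    (hmem : modularS Ω γ β θ u Du < ⊤) :
    ENNReal.ofReal (min (pseudoNormS Ω γ β θ u Du ^ (gm + bm))
        (pseudoNormS Ω γ β θ u Du ^ tp))
      ≤ modularS Ω γ β θ u Du ∧
    modularS Ω γ β θ u Du
      ≤ ENNReal.ofReal (max (pseudoNormS Ω γ β θ u Du ^ (gm + bm))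
          (pseudoNormS Ω γ β θ u Du ^ tp)) :=
  stmt8_general Ω γ β θ gm bm tp hgm1 hbm1 hbd ε₀ hε₀ hθge u Du hmem
end

section
/- Let Ω ⊂ ℝⁿ be a bounded domain with Lipschitz boundary, γ, β, θ ∈ M₀(Ω) with θ(x) ≥ γ(x)+β(x)+ε₀ a.e. for some ε₀ > 0, and p ∈ M₀(Ω) with p(x) ≥ θ(x) a.e. Then the embedding W^{1,p(x)}(Ω) ⊂ S_{1,γ(x),β(x),θ(x)}(Ω) holds; i.e., every u ∈ W^{1,p(x)}(Ω) satisfies ∫_Ω |u|^{θ(x)} dx + Σᵢ ∫_Ω |u|^{γ(x)} |D_i u|^{β(x)} dx < ∞, with the quantitative bound ℜ^{γ,β,θ}(u) ≤ (n+1)(σ_p(u) + |Ω|) + Σᵢ σ_p(D_i u). -/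
open MeasureTheory ENNReal

private lemma pow_bound {a b γ β pp : ℝ} (ha : 0 ≤ a) (hb : 0 ≤ b)
    (hγ0 : 0 ≤ γ) (hβ0 : 0 ≤ β) (hγβp : γ + β ≤ pp) :
    a ^ γ * b ^ β ≤ a ^ pp + b ^ pp + 1 := by
  set M : ℝ := max (max a b) 1 with hM
  have hM1 : (1 : ℝ) ≤ M := le_max_right _ _
  have hM0 : 0 ≤ M := le_trans zero_le_one hM1
  have haM : a ≤ M := le_trans (le_max_left a b) (le_max_left _ _)
  have hbM : b ≤ M := le_trans (le_max_right a b) (le_max_left _ _)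
  have h1 : a ^ γ * b ^ β ≤ M ^ γ * M ^ β := by
    have := Real.rpow_le_rpow ha haM hγ0
    have := Real.rpow_le_rpow hb hbM hβ0
    exact mul_le_mul ‹a ^ γ ≤ M ^ γ› ‹b ^ β ≤ M ^ β› (Real.rpow_nonneg hb β)
      (Real.rpow_nonneg hM0 γ)
  have h2 : M ^ γ * M ^ β = M ^ (γ + β) :=
    (Real.rpow_add (lt_of_lt_of_le zero_lt_one hM1) γ β).symm
  have h3 : M ^ (γ + β) ≤ M ^ pp := Real.rpow_le_rpow_of_exponent_le hM1 hγβp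
  have h4 : M ^ pp ≤ a ^ pp + b ^ pp + 1 := by
    have hcases : M = a ∨ M = b ∨ M = 1 := by
      rcases max_choice (max a b) 1 with h | h
      · rcases max_choice a b with h' | h'
        · exact Or.inl (h.trans h')
        · exact Or.inr (Or.inl (h.trans h'))
      · exact Or.inr (Or.inr h)
    have hpa := Real.rpow_nonneg ha pp
    have hpb := Real.rpow_nonneg hb pp
    rcases hcases with h | h | h <;> rw [h]
    · linarith
    · linarith
    · rw [Real.one_rpow]; linarith
  calc a ^ γ * b ^ β ≤ M ^ γ * M ^ β := h1
    _ = M ^ (γ + β) := h2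
    _ ≤ M ^ pp := h3
    _ ≤ a ^ pp + b ^ pp + 1 := h4

/-- embedding `W^{1,p(x)}(Ω) ⊂ S_{1,γ(x),β(x),θ(x)}(Ω)` with the
quantitative bound `ℜ^{γ,β,θ}(u) ≤ (n+1)(σ_p(u) + |Ω|) + Σᵢ σ_p(D_i u)`. -/
theorem stmt9 {n : ℕ} (Ω : Set (Fin n → ℝ)) (hΩm : MeasurableSet Ω)
    (hΩb : Bornology.IsBounded Ω)
    (γ β θ p : (Fin n → ℝ) → ℝ)
    (hγ : Measurable γ) (hβ : Measurable β) (hθ : Measurable θ) (hp : Measurable p)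
    (hγ1 : ∀ᵐ x ∂(volume.restrict Ω), 1 ≤ γ x)
    (hβ1 : ∀ᵐ x ∂(volume.restrict Ω), 1 ≤ β x)
    (ε₀ : ℝ) (hε₀ : 0 < ε₀)
    (hθge : ∀ᵐ x ∂(volume.restrict Ω), γ x + β x + ε₀ ≤ θ x)
    (hpθ : ∀ᵐ x ∂(volume.restrict Ω), θ x ≤ p x)
    (u : (Fin n → ℝ) → ℝ) (hu : Measurable u)
    (Du : Fin n → (Fin n → ℝ) → ℝ) (hDu : ∀ i, Measurable (Du i))
    (hufin : ∫⁻ x in Ω, ENNReal.ofReal (|u x| ^ p x) < ⊤)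
    (hDufin : ∀ i, ∫⁻ x in Ω, ENNReal.ofReal (|Du i x| ^ p x) < ⊤) :
    (∫⁻ x in Ω, ENNReal.ofReal (|u x| ^ θ x))
        + ∑ i : Fin n, ∫⁻ x in Ω, ENNReal.ofReal (|u x| ^ γ x * |Du i x| ^ β x)
      ≤ ((n : ℝ≥0∞) + 1) * ((∫⁻ x in Ω, ENNReal.ofReal (|u x| ^ p x)) + volume Ω)
        + ∑ i : Fin n, ∫⁻ x in Ω, ENNReal.ofReal (|Du i x| ^ p x) := by
  set A := ∫⁻ x in Ω, ENNReal.ofReal (|u x| ^ p x) with hA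
  set V := volume Ω with hV
  -- bound on the θ term
  have hθterm : (∫⁻ x in Ω, ENNReal.ofReal (|u x| ^ θ x)) ≤ A + V := by
    have hptw : ∀ᵐ x ∂(volume.restrict Ω),
        ENNReal.ofReal (|u x| ^ θ x) ≤ ENNReal.ofReal (|u x| ^ p x) + 1 := by
      filter_upwards [hγ1, hβ1, hθge, hpθ] with x h1 h2 h3 h4
      have hθ0 : 0 ≤ θ x := by linarith
      have hle : |u x| ^ θ x ≤ |u x| ^ p x + 1 := by
        rcases le_total (|u x|) 1 with h | h
        · have := Real.rpow_le_one (abs_nonneg _) h hθ0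
          have := Real.rpow_nonneg (abs_nonneg (u x)) (p x)
          linarith
        · have h5 : |u x| ^ θ x ≤ |u x| ^ p x :=
            Real.rpow_le_rpow_of_exponent_le h h4
          linarith
      calc ENNReal.ofReal (|u x| ^ θ x) ≤ ENNReal.ofReal (|u x| ^ p x + 1) :=
            ENNReal.ofReal_le_ofReal hle
        _ = ENNReal.ofReal (|u x| ^ p x) + 1 := by
            rw [ENNReal.ofReal_add (Real.rpow_nonneg (abs_nonneg _) _) zero_le_one,
              ENNReal.ofReal_one]
    calc (∫⁻ x in Ω, ENNReal.ofReal (|u x| ^ θ x))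
        ≤ ∫⁻ x in Ω, (ENNReal.ofReal (|u x| ^ p x) + 1) := lintegral_mono_ae hptw
      _ = A + V := by
          rw [lintegral_add_right _ measurable_const, lintegral_one,
            Measure.restrict_apply_univ]
  -- bound on each product term
  have hprod : ∀ i : Fin n,
      (∫⁻ x in Ω, ENNReal.ofReal (|u x| ^ γ x * |Du i x| ^ β x))
        ≤ A + (∫⁻ x in Ω, ENNReal.ofReal (|Du i x| ^ p x)) + V := by
    intro i
    have hptw : ∀ᵐ x ∂(volume.restrict Ω),
        ENNReal.ofReal (|u x| ^ γ x * |Du i x| ^ β x)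
          ≤ ENNReal.ofReal (|u x| ^ p x) + ENNReal.ofReal (|Du i x| ^ p x) + 1 := by
      filter_upwards [hγ1, hβ1, hθge, hpθ] with x h1 h2 h3 h4
      have hle : |u x| ^ γ x * |Du i x| ^ β x ≤ |u x| ^ p x + |Du i x| ^ p x + 1 :=
        pow_bound (abs_nonneg _) (abs_nonneg _) (by linarith) (by linarith) (by linarith)
      calc ENNReal.ofReal (|u x| ^ γ x * |Du i x| ^ β x)
          ≤ ENNReal.ofReal (|u x| ^ p x + |Du i x| ^ p x + 1) :=
            ENNReal.ofReal_le_ofReal hle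
        _ = ENNReal.ofReal (|u x| ^ p x) + ENNReal.ofReal (|Du i x| ^ p x) + 1 := by
            rw [ENNReal.ofReal_add (by positivity) zero_le_one, ENNReal.ofReal_one,
              ENNReal.ofReal_add (Real.rpow_nonneg (abs_nonneg _) _)
                (Real.rpow_nonneg (abs_nonneg _) _)]
    calc (∫⁻ x in Ω, ENNReal.ofReal (|u x| ^ γ x * |Du i x| ^ β x))
        ≤ ∫⁻ x in Ω, (ENNReal.ofReal (|u x| ^ p x) + ENNReal.ofReal (|Du i x| ^ p x) + 1) :=
          lintegral_mono_ae hptw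
      _ = A + (∫⁻ x in Ω, ENNReal.ofReal (|Du i x| ^ p x)) + V := by
          rw [lintegral_add_right _ measurable_const, lintegral_one,
            Measure.restrict_apply_univ,
            lintegral_add_left (by measurability)]
  calc (∫⁻ x in Ω, ENNReal.ofReal (|u x| ^ θ x))
        + ∑ i : Fin n, ∫⁻ x in Ω, ENNReal.ofReal (|u x| ^ γ x * |Du i x| ^ β x)
      ≤ (A + V) + ∑ i : Fin n,
          (A + (∫⁻ x in Ω, ENNReal.ofReal (|Du i x| ^ p x)) + V) :=
        add_le_add hθterm (Finset.sum_le_sum fun i _ => hprod i)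
    _ = ((n : ℝ≥0∞) + 1) * (A + V)
        + ∑ i : Fin n, ∫⁻ x in Ω, ENNReal.ofReal (|Du i x| ^ p x) := by
        have : ∀ i : Fin n, A + (∫⁻ x in Ω, ENNReal.ofReal (|Du i x| ^ p x)) + V
            = (A + V) + (∫⁻ x in Ω, ENNReal.ofReal (|Du i x| ^ p x)) := fun i => by ring
        simp only [this, Finset.sum_add_distrib, Finset.sum_const, Finset.card_univ,
          Fintype.card_fin, nsmul_eq_mul]
        ring
end
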